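/- In a DAG G over V ∪ R with all nodes of R being leaves and Assumption 1 (no R node is a parent of any V node) holding, if X and Y in V are NOT d-separated by Z ⊆ V \ {X, Y}, then X and Y are NOT d-separated by Z ∪ S for any S ⊆ R consisting of indicators, i.e., adding leaf indicator nodes to the conditioning set cannot block an active path unless some indicator lies on the path as a non-collider — which is impossible since leaves on a path must be colliders or endpoints. Hence d-connection given Z implies d-connection given Z ∪ S. -/

import Mathlib

/-!
A leaf has no outgoing edges, so at an interior position of an undirected path both path edges
point into it: it is a collider. Conditioning on additional leaves therefore only weakens the
requirement on colliders and never blocks a non-collider, so a path active given `Z` stays active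
given `Z ∪ S`.
-/

/-- A directed graph (edge relation) is acyclic. -/
def IsAcyclic {α : Type*} (G : α → α → Prop) : Prop :=
  ∀ v, ¬ Relation.TransGen G v v

/-- A leaf node: no outgoing edges. -/
def IsLeaf {α : Type*} (G : α → α → Prop) (v : α) : Prop :=
  ∀ w, ¬ G v w

/-- An undirected path from `x` to `y`: a list of at least two distinct vertices,
starting at `x`, ending at `y`, consecutive vertices adjacent (in either direction). -/
def IsUPath {α : Type*} (G : α → α → Prop) (x y : α) (p : List α) : Prop :=
  2 ≤ p.length ∧ p.head? = some x ∧ p.getLast? = some y ∧ p.Nodup ∧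
    p.Chain' (fun a b => G a b ∨ G b a)

/-- The vertex at (interior) position `i` of `p` is a collider:
both adjacent path edges point into it. -/
def ColliderAt {α : Type*} (G : α → α → Prop) (p : List α) (i : ℕ) : Prop :=
  ∃ a b c, p[i-1]? = some a ∧ p[i]? = some b ∧ p[i+1]? = some c ∧ G a b ∧ G c b

/-- A path is active given conditioning set `S`: every interior collider is in `S`
or has a descendant in `S`, and every interior non-collider is not in `S`. -/
def ActivePath {α : Type*} (G : α → α → Prop) (S : Set α) (x y : α) (p : List α) : Prop :=
  IsUPath G x y p ∧
    ∀ i, 0 < i → i + 1 < p.length →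
      ∀ b, p[i]? = some b →
        (ColliderAt G p i → b ∈ S ∨ ∃ d ∈ S, Relation.ReflTransGen G b d) ∧
        (¬ ColliderAt G p i → b ∉ S)

/-- d-separation: no active undirected path between `x` and `y` given `S`. -/
def DSep {α : Type*} (G : α → α → Prop) (x y : α) (S : Set α) : Prop :=
  ∀ p : List α, ¬ ActivePath G S x y p

theorem colliderAt_of_isLeaf {α : Type*} {G : α → α → Prop} {p : List α}
    (hp : p.IsChain fun a b => G a b ∨ G b a) {i : ℕ} (hi0 : 0 < i) (hi : i + 1 < p.length)
    {b : α} (hb : p[i]? = some b) (hb_leaf : IsLeaf G b) : ColliderAt G p i := by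
  have hchain := List.isChain_iff_getElem.mp hp
  obtain ⟨hi', rfl⟩ := List.getElem?_eq_some_iff.mp hb
  obtain ⟨j, rfl⟩ : ∃ j, i = j + 1 := ⟨i - 1, by omega⟩
  refine ⟨p[j], p[j + 1], p[j + 2], by simp, hb, List.getElem?_eq_getElem hi, ?_, ?_⟩
  · exact (hchain j hi').resolve_right (hb_leaf _)
  · exact (hchain (j + 1) hi).resolve_left (hb_leaf _)

theorem ActivePath.union_of_isLeaf {α : Type*} {G : α → α → Prop} {Z S : Set α} {x y : α}
    {p : List α} (hp : ActivePath G Z x y p) (hS : ∀ s ∈ S, IsLeaf G s) :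
    ActivePath G (Z ∪ S) x y p := by
  refine ⟨hp.1, fun i hi0 hi b hb => ⟨fun hcol => ?_, fun hncol hbZS => ?_⟩⟩
  · rcases (hp.2 i hi0 hi b hb).1 hcol with hbZ | ⟨d, hdZ, hbd⟩
    · exact .inl (.inl hbZ)
    · exact .inr ⟨d, .inl hdZ, hbd⟩
  · rcases hbZS with hbZ | hbS
    · exact (hp.2 i hi0 hi b hb).2 hncol hbZ
    · exact hncol (colliderAt_of_isLeaf hp.1.2.2.2.2 hi0 hi hb (hS b hbS))

theorem dconnected_of_union_leaf_indicators_general {α : Type*} (G : α → α → Prop)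
    (R : Set α)
    (hleaf : ∀ r ∈ R, IsLeaf G r)
    (X Y : α)
    (Z : Set α)
    (S : Set α) (hS : S ⊆ R)
    (hconn : ¬ DSep G X Y Z) : ¬ DSep G X Y (Z ∪ S) :=
  fun hsep => hconn fun p hp => hsep p (hp.union_of_isLeaf fun s hs => hleaf s (hS hs))

/-- in a DAG over `V ∪ R` with all nodes of `R` leaves (so in
particular no node of `R` is a parent of any node of `V`), if `X, Y ∈ V` are
d-connected given `Z ⊆ V \ {X, Y}`, then they remain d-connected given `Z ∪ S`
for any `S ⊆ R` disjoint from `{X, Y} ∪ Z`. -/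
theorem dconnected_of_union_leaf_indicators {α : Type*} (G : α → α → Prop)
    (hG : IsAcyclic G) (V R : Set α) (hVR : Disjoint V R)
    (hleaf : ∀ r ∈ R, IsLeaf G r)
    (hnoparent : ∀ r ∈ R, ∀ v ∈ V, ¬ G r v)
    (X Y : α) (hX : X ∈ V) (hY : Y ∈ V) (hXY : X ≠ Y)
    (Z : Set α) (hZ : Z ⊆ V \ {X, Y})
    (S : Set α) (hS : S ⊆ R) (hSdisj : Disjoint S ({X, Y} ∪ Z))
    (hconn : ¬ DSep G X Y Z) : ¬ DSep G X Y (Z ∪ S) :=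
  dconnected_of_union_leaf_indicators_general G R hleaf X Y Z S hS hconn
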